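/- Let T be a QBDC with λ_n ≠ 0 for all n. If φ is a normal invariant state of T with φ(e_{n,n}) ≠ 0 and φ(e_{n+1,n+1}) = 0 for some n, then a contradiction arises; hence for any normal invariant state there exists m with φ(e_{k,k}) ≠ 0 for all k ≥ m. -/

import Mathlib

open scoped ComplexOrder
open Filter

noncomputable section

abbrev H2 : Type := lp (fun _ : ℕ => ℂ) 2

abbrev BH : Type := H2 →L[ℂ] H2

def ee (n : ℕ) : H2 := lp.single 2 n 1

/-- matrix unit e_{n,m} : e_k ↦ δ_{m,k} e_n -/
def mU (n m : ℕ) : BH := (innerSL ℂ (ee m)).smulRight (ee n)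

/-- projection onto span{e_k : n ≤ k ≤ m} -/
def pI (n m : ℕ) : BH := ∑ k ∈ Finset.Icc n m, mU k k

def IsUCP (T : BH → BH) : Prop :=
  T 1 = 1 ∧ (∀ x y : BH, T (x + y) = T x + T y) ∧
  (∀ (c : ℂ) (x : BH), T (c • x) = c • T x) ∧
  ∀ (n : ℕ) (a : Fin n → BH) (ξ : Fin n → H2),
    0 ≤ ∑ i, ∑ j, (inner ℂ (ξ i) (T (star (a i) * a j) (ξ j)) : ℂ)

def IsQBDC (T : BH → BH) : Prop :=
  IsUCP T ∧ ∀ n m : ℕ, n ≤ m →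
    (T (pI n m) - pI (n+1) (m-1)).IsPositive ∧
    (pI (n-1) (m+1) - T (pI n m)).IsPositive

def IsNormalState (φ : BH → ℂ) : Prop :=
  ∃ ξ : ℕ → H2, Summable (fun k => ‖ξ k‖ ^ 2) ∧ (∑' k, ‖ξ k‖ ^ 2) = 1 ∧
    ∀ x : BH, φ x = ∑' k, (inner ℂ (ξ k) (x (ξ k)) : ℂ)

def InvState (T : BH → BH) (φ : BH → ℂ) : Prop := ∀ x, φ (T x) = φ x

/-- birth rate λ_n = Tr(e_{n,n} T(e_{n+1,n+1})) -/
def lamr (T : BH → BH) (n : ℕ) : ℝ := (inner ℂ (ee n) (T (mU (n+1) (n+1)) (ee n)) : ℂ).re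

/-- death rate μ_n = Tr(e_{n,n} T(e_{n-1,n-1})) -/
def mur (T : BH → BH) (n : ℕ) : ℝ := (inner ℂ (ee n) (T (mU (n-1) (n-1)) (ee n)) : ℂ).re

/-- η_n = Tr(e_{n+1,n} T(e_{n,n})) -/
def etar (T : BH → BH) (n : ℕ) : ℂ := (inner ℂ (ee n) (T (mU n n) (ee (n+1))) : ℂ)

/-- quadratic form ⟨Aξ,ξ⟩ of a matrix-encoded operator with domain D = span{e_n} -/
def Qf (A : ℕ → ℕ → ℂ) (ξ : ℕ →₀ ℂ) : ℂ :=
  ∑ a ∈ ξ.support, ∑ b ∈ ξ.support, (starRingEnd ℂ) (ξ a) * A a b * ξ b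

/-- application of a QBDC to an (unbounded) operator encoded by its matrix -/
def TU (T : BH → BH) (A : ℕ → ℕ → ℂ) : ℕ → ℕ → ℂ := fun a b =>
  ∑ n ∈ Finset.Icc (a-1) (a+1), ∑ m ∈ Finset.Icc (b-1) (b+1),
    A n m * (inner ℂ (ee a) (T (mU n m) (ee b)) : ℂ)

/-!
Write `φ = ∑ₖ ⟪ξₖ, · ξₖ⟫`. If `φ(e_{n+1,n+1}) = 0`, every `ξₖ` has vanishing `(n+1)`-st
coordinate, and invariance gives `φ(P_{[0,n+1]} - T(P_{[0,n]})) = φ(e_{n+1,n+1}) = 0`. Since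
`0 ≤ T(P_{[0,n]}) ≤ P_{[0,n+1]}`, the operator `T(P_{[0,n]})` then fixes `wₖ = P_{[0,n+1]} ξₖ`,
and as `T(P_{[0,n]}) + T(e_{n+1,n+1}) = T(P_{[0,n+1]}) ≤ 1`, `T(e_{n+1,n+1})` kills `wₖ`.
But `T(e_{n+1,n+1}) ≤ P_{[n,n+2]}` only sees the `n`-th coordinate of `wₖ`, so
`0 = ⟪e_n, T(e_{n+1,n+1}) wₖ⟫ = ξₖ(n) ⟪e_n, T(e_{n+1,n+1}) e_n⟫`, and the last factor has real
part `λ_n ≠ 0`. Hence zeros of `k ↦ φ(e_{k,k})` propagate downwards, while `φ ≠ 0` forces some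
`φ(e_{m,m}) ≠ 0`.
-/

open scoped InnerProductSpace

section HilbertSpace

variable {H : Type*} [NormedAddCommGroup H] [InnerProductSpace ℂ H]

namespace ContinuousLinearMap

theorem nonneg_of_inner_apply_self_nonneg {a : H →L[ℂ] H} (h : ∀ x, 0 ≤ ⟪x, a x⟫_ℂ) :
    0 ≤ a := by
  have hreal (x : H) : ⟪a x, x⟫_ℂ = ⟪x, a x⟫_ℂ := by
    rw [← inner_conj_symm]; exact (h x).isSelfAdjoint.star_eq
  rw [nonneg_iff_isPositive, isPositive_iff]
  refine ⟨(LinearMap.isSymmetric_iff_inner_map_self_real _).mpr fun x => ?_, fun x => ?_⟩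
  · rw [coe_coe, hreal]; exact (h x).isSelfAdjoint.star_eq
  · exact hreal x ▸ h x

theorem apply_eq_zero_of_inner_apply_self_eq_zero [CompleteSpace H] {a : H →L[ℂ] H}
    (ha : 0 ≤ a) {x : H} (hx : ⟪x, a x⟫_ℂ = 0) : a x = 0 := by
  obtain ⟨b, rfl⟩ := CStarAlgebra.nonneg_iff_eq_star_mul_self.mp ha
  rw [mul_apply_eq_comp, star_eq_adjoint, adjoint_inner_right, inner_self_eq_zero] at hx
  rw [mul_apply_eq_comp, hx, map_zero]

theorem apply_eq_zero_of_add_le_one [CompleteSpace H] {a b : H →L[ℂ] H} (ha : 0 ≤ a)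
    (hab : b + a ≤ 1) {x : H} (hbx : b x = x) : a x = 0 := by
  refine apply_eq_zero_of_inner_apply_self_eq_zero ha (le_antisymm ?_ ?_)
  · have := ((nonneg_iff_isPositive _).mp (sub_nonneg.mpr hab)).inner_nonneg_right x
    simpa [inner_sub_right, inner_add_right, hbx] using this
  · exact ((nonneg_iff_isPositive _).mp ha).inner_nonneg_right x

end ContinuousLinearMap

def vectorState (ξ : ℕ → H) (a : H →L[ℂ] H) : ℂ := ∑' k, ⟪ξ k, a (ξ k)⟫_ℂ

variable {ξ : ℕ → H}

theorem summable_inner_apply (hξ : Summable fun k => ‖ξ k‖ ^ 2) (a : H →L[ℂ] H) :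
    Summable fun k => ⟪ξ k, a (ξ k)⟫_ℂ := by
  refine .of_norm_bounded (hξ.mul_left ‖a‖) fun k => ?_
  calc ‖⟪ξ k, a (ξ k)⟫_ℂ‖ ≤ ‖ξ k‖ * (‖a‖ * ‖ξ k‖) :=
        (norm_inner_le_norm _ _).trans (by gcongr; exact a.le_opNorm _)
    _ = ‖a‖ * ‖ξ k‖ ^ 2 := by ring

theorem vectorState_sub (hξ : Summable fun k => ‖ξ k‖ ^ 2) (a b : H →L[ℂ] H) :
    vectorState ξ (a - b) = vectorState ξ a - vectorState ξ b := by
  simp only [vectorState, sub_apply, inner_sub_right]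
  exact (summable_inner_apply hξ a).tsum_sub (summable_inner_apply hξ b)

theorem vectorState_eq_zero_iff [CompleteSpace H] (hξ : Summable fun k => ‖ξ k‖ ^ 2)
    {a : H →L[ℂ] H} (ha : 0 ≤ a) : vectorState ξ a = 0 ↔ ∀ k, a (ξ k) = 0 := by
  have hnonneg (k : ℕ) : 0 ≤ ⟪ξ k, a (ξ k)⟫_ℂ :=
    ((ContinuousLinearMap.nonneg_iff_isPositive a).mp ha).inner_nonneg_right _
  rw [vectorState, ← (summable_inner_apply hξ a).hasSum_iff, hasSum_zero_iff_of_nonneg hnonneg,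
    funext_iff]
  exact forall_congr' fun k =>
    ⟨ContinuousLinearMap.apply_eq_zero_of_inner_apply_self_eq_zero ha, fun h => by simp [h]⟩

end HilbertSpace

theorem inner_ee_left (i : ℕ) (v : H2) : ⟪ee i, v⟫_ℂ = v i := by
  simp [ee, lp.inner_single_left]

theorem ee_apply (i j : ℕ) : ee i j = if j = i then 1 else 0 := by
  simp [ee, lp.single_apply, Pi.single_apply]

theorem mU_apply (n m : ℕ) (v : H2) : mU n m v = v m • ee n := by
  simp [mU, inner_ee_left]

theorem star_mU (n m : ℕ) : star (mU n m) = mU m n :=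
  InnerProductSpace.adjoint_rankOne (ee n) (ee m)

theorem mU_self_apply_eq_zero_iff (n : ℕ) (v : H2) : mU n n v = 0 ↔ v n = 0 := by
  have : ee n ≠ 0 := fun h => by simpa [ee_apply] using congrArg (fun w : H2 => w n) h
  simp [mU_apply, this]

theorem pI_apply_apply (a b : ℕ) (v : H2) (j : ℕ) :
    pI a b v j = if j ∈ Finset.Icc a b then v j else 0 := by
  rw [pI, sum_apply, lp.coeFn_sum, Finset.sum_apply]
  simp [mU_apply, ee_apply]

theorem pI_mul_pI (a b c d : ℕ) : pI a b * pI c d = pI (max a c) (min b d) := by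
  ext v j
  simp only [mul_apply_eq_comp, pI_apply_apply, Finset.mem_Icc, max_le_iff, le_min_iff]
  split_ifs <;> first | rfl | omega

theorem isStarProjection_pI (a b : ℕ) : IsStarProjection (pI a b) where
  isIdempotentElem := by rw [IsIdempotentElem, pI_mul_pI, max_self, min_self]
  isSelfAdjoint := by simp only [IsSelfAdjoint, pI, star_sum, star_mU]

theorem pI_self (n : ℕ) : pI n n = mU n n := by
  rw [pI, Finset.Icc_self, Finset.sum_singleton]

theorem pI_succ_top {a b : ℕ} (h : a ≤ b + 1) :
    pI a (b + 1) = pI a b + mU (b + 1) (b + 1) :=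
  Finset.sum_Icc_succ_top h _

theorem vectorState_mU_self_eq_zero_iff {ξ : ℕ → H2} (hξ : Summable fun k => ‖ξ k‖ ^ 2)
    (n : ℕ) : vectorState ξ (mU n n) = 0 ↔ ∀ k, ξ k n = 0 := by
  rw [vectorState_eq_zero_iff hξ (pI_self n ▸ (isStarProjection_pI n n).nonneg)]
  simp only [mU_self_apply_eq_zero_iff]

theorem exists_vectorState_mU_self_ne_zero {ξ : ℕ → H2}
    (hξ : Summable fun k => ‖ξ k‖ ^ 2) {k : ℕ} (hk : ξ k ≠ 0) : ∃ m, vectorState ξ (mU m m) ≠ 0 := by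
  by_contra! h
  exact hk (lp.ext (funext fun m => (vectorState_mU_self_eq_zero_iff hξ m).mp (h m) k))

namespace IsUCP

variable {T : BH → BH}

theorem map_add (hT : IsUCP T) (a b : BH) : T (a + b) = T a + T b :=
  hT.2.1 a b

theorem map_star_mul_self_nonneg (hT : IsUCP T) (a : BH) : 0 ≤ T (star a * a) :=
  ContinuousLinearMap.nonneg_of_inner_apply_self_nonneg fun v => by
    simpa using hT.2.2.2 1 (fun _ => a) (fun _ => v)

theorem monotone (hT : IsUCP T) : Monotone T := by
  let T' : BH →+ BH := AddMonoidHom.mk' T hT.map_add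
  intro a b hab
  rw [← sub_nonneg] at hab ⊢
  change 0 ≤ T' b - T' a
  rw [← map_sub]
  replace hab := StarOrderedRing.nonneg_iff.mp hab
  generalize b - a = c at hab ⊢
  induction hab using AddSubmonoid.closure_induction with
  | mem _ hc =>
    obtain ⟨s, rfl⟩ := hc
    exact hT.map_star_mul_self_nonneg s
  | zero => exact (map_zero T').ge
  | add x y _ _ hx hy => exact (_root_.map_add T' x y).symm ▸ add_nonneg hx hy

theorem map_pI_nonneg (hT : IsUCP T) (a b : ℕ) : 0 ≤ T (pI a b) := by
  have hp := isStarProjection_pI a b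
  simpa [hp.isSelfAdjoint.star_eq, hp.isIdempotentElem.eq]
    using hT.map_star_mul_self_nonneg (pI a b)

theorem map_pI_le_one (hT : IsUCP T) (a b : ℕ) : T (pI a b) ≤ 1 :=
  hT.1 ▸ hT.monotone (isStarProjection_pI a b).le_one

end IsUCP

namespace IsQBDC

variable {T : BH → BH}

theorem map_pI_le (hT : IsQBDC T) {n m : ℕ} (h : n ≤ m) : T (pI n m) ≤ pI (n - 1) (m + 1) :=
  (hT.2 n m h).2

theorem map_mU_succ_apply_pI_of_apply_succ_eq_zero (hT : IsQBDC T) {n : ℕ} {v : H2}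
    (hv : v (n + 1) = 0) :
    T (mU (n + 1) (n + 1)) (pI 0 (n + 1) v) = v n • T (mU (n + 1) (n + 1)) (ee n) := by
  have hA : 0 ≤ T (mU (n + 1) (n + 1)) := pI_self (n + 1) ▸ hT.1.map_pI_nonneg _ _
  have hAP : T (mU (n + 1) (n + 1)) ≤ pI n (n + 2) := by
    simpa [pI_self] using hT.map_pI_le (le_refl (n + 1))
  have hPQ : pI n (n + 2) * pI 0 (n + 1) = mU n n + mU (n + 1) (n + 1) := by
    rw [pI_mul_pI, max_eq_left n.zero_le, min_eq_right (by omega), pI_succ_top n.le_succ,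
      pI_self]
  conv_lhs => rw [← ((isStarProjection_pI _ _).mul_right_and_mul_left_of_nonneg_of_le hA hAP).1]
  rw [mul_apply_eq_comp, ← mul_apply_eq_comp (pI n (n + 2)), hPQ, add_apply,
    mU_apply, mU_apply, hv, zero_smul, add_zero, map_smul]

theorem map_mU_succ_apply_pI_eq_zero (hT : IsQBDC T) {n : ℕ} {ξ : ℕ → H2}
    (hξ : Summable fun k => ‖ξ k‖ ^ 2)
    (hinv : vectorState ξ (T (pI 0 n)) = vectorState ξ (pI 0 n))
    (hzero : vectorState ξ (mU (n + 1) (n + 1)) = 0) (k : ℕ) :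
    T (mU (n + 1) (n + 1)) (pI 0 (n + 1) (ξ k)) = 0 := by
  have hQ : pI 0 (n + 1) = pI 0 n + mU (n + 1) (n + 1) := pI_succ_top n.succ.zero_le
  have hB : 0 ≤ T (pI 0 n) := hT.1.map_pI_nonneg 0 n
  have hBQ : T (pI 0 n) ≤ pI 0 (n + 1) := hT.map_pI_le n.zero_le
  have hBξ : T (pI 0 n) (ξ k) = pI 0 (n + 1) (ξ k) := by
    have h : vectorState ξ (pI 0 (n + 1) - T (pI 0 n)) = 0 := by
      rw [vectorState_sub hξ, hinv, ← vectorState_sub hξ, hQ, add_sub_cancel_left, hzero]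
    exact (sub_eq_zero.mp ((vectorState_eq_zero_iff hξ (sub_nonneg.mpr hBQ)).mp h k)).symm
  have hBw : T (pI 0 n) (pI 0 (n + 1) (ξ k)) = pI 0 (n + 1) (ξ k) := by
    rw [← mul_apply_eq_comp,
      ((isStarProjection_pI _ _).mul_right_and_mul_left_of_nonneg_of_le hB hBQ).1, hBξ]
  refine ContinuousLinearMap.apply_eq_zero_of_add_le_one
    (pI_self (n + 1) ▸ hT.1.map_pI_nonneg _ _) ?_ hBw
  rw [← hT.1.map_add, ← hQ]
  exact hT.1.map_pI_le_one 0 (n + 1)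

theorem vectorState_mU_self_eq_zero_of_succ (hT : IsQBDC T) {n : ℕ} (hlam : lamr T n ≠ 0)
    {ξ : ℕ → H2} (hξ : Summable fun k => ‖ξ k‖ ^ 2)
    (hinv : vectorState ξ (T (pI 0 n)) = vectorState ξ (pI 0 n))
    (hzero : vectorState ξ (mU (n + 1) (n + 1)) = 0) :
    vectorState ξ (mU n n) = 0 := by
  have hcoord := (vectorState_mU_self_eq_zero_iff hξ _).mp hzero
  refine (vectorState_mU_self_eq_zero_iff hξ n).mpr fun k => ?_
  have h := congrArg (⟪ee n, ·⟫_ℂ) (hT.map_mU_succ_apply_pI_of_apply_succ_eq_zero (hcoord k))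
  rw [hT.map_mU_succ_apply_pI_eq_zero hξ hinv hzero k, inner_zero_right, inner_smul_right] at h
  exact (mul_eq_zero.mp h.symm).resolve_right fun h => hlam (by rw [lamr, h, Complex.zero_re])

end IsQBDC

/-- **Diagonal support of normal invariant states of a QBDC with nonvanishing
birth rates.**  If `φ` is a normal invariant state and `λ_n ≠ 0` for all `n`, then
`φ(e_{n,n}) ≠ 0 ∧ φ(e_{n+1,n+1}) = 0` is impossible; hence there is `m` with
`φ(e_{k,k}) ≠ 0` for all `k ≥ m`. -/
theorem qbdc_invariant_state_diagonal_support
    (T : BH → BH) (hT : IsQBDC T)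
    (hlam : ∀ n, lamr T n ≠ 0)
    (φ : BH → ℂ) (hφ : IsNormalState φ) (hinv : InvState T φ) :
    (∀ n : ℕ, ¬ (φ (mU n n) ≠ 0 ∧ φ (mU (n + 1) (n + 1)) = 0)) ∧
    ∃ m : ℕ, ∀ k, m ≤ k → φ (mU k k) ≠ 0 := by
  obtain ⟨ξ, hξ, hnorm, hφξ⟩ := hφ
  obtain rfl : φ = vectorState ξ := funext hφξ
  have hstep (n : ℕ) : vectorState ξ (mU (n + 1) (n + 1)) = 0 → vectorState ξ (mU n n) = 0 :=
    hT.vectorState_mU_self_eq_zero_of_succ (hlam n) hξ (hinv _)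
  refine ⟨fun n ⟨hn, hn1⟩ => hn (hstep n hn1), ?_⟩
  obtain ⟨k, hk⟩ : ∃ k, ξ k ≠ 0 := by
    by_contra! h
    simp [h] at hnorm
  obtain ⟨m, hm⟩ := exists_vectorState_mU_self_ne_zero hξ hk
  refine ⟨m, fun k hk => ?_⟩
  induction k, hk using Nat.le_induction with
  | base => exact hm
  | succ k _ ih => exact fun h => ih (hstep k h)
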